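/- Let n ≥ 3 and m ≥ 1 be integers, ε : Fin n → ℝ with ε(i) ∈ {1, −1} for each i, and α : Fin n → ℝ with α ≠ 0 and Σᵢ ε(i)·α(i)² = 0. Let Φ, F : ℝ → ℝ be smooth functions with F > 0 and Φ nowhere zero, define φ, f : ℝⁿ → ℝ by φ(x) = Φ(Σᵢ α(i)·xᵢ) and f(x) = F(Σᵢ α(i)·xᵢ), and let λ, λ_F be real constants (with λ_F = 0 if m = 1). Then the warped-product Einstein PDE system (P1)–(P3) holds at every point x ∈ ℝⁿ if and only if λ = 0, λ_F = 0, and (n−2)·F(ξ)·Φ''(ξ) − m·Φ(ξ)·F''(ξ) − 2m·Φ'(ξ)·F'(ξ) = 0 for all ξ ∈ ℝ. -/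

import Mathlib

/-- Partial derivative of `u : ℝⁿ → ℝ` in the `i`-th coordinate direction. -/
noncomputable def pd {n : ℕ} (i : Fin n) (u : (Fin n → ℝ) → ℝ) (x : Fin n → ℝ) : ℝ :=
  fderiv ℝ u x (Pi.single i 1)

/-- The warped-product Einstein PDE system (P1)–(P3) (equations (1.2)–(1.4) of the paper)
for the metric `(1/φ²)g + f²g_F` on pseudo-Euclidean space `(ℝⁿ, g)`, `g_{ij} = δ_{ij}ε_i`,
with Einstein constants `lam` (ambient) and `lamF` (fiber) and fiber dimension `m`. -/
def EinsteinPDE (n m : ℕ) (ε : Fin n → ℝ) (φ f : (Fin n → ℝ) → ℝ) (lam lamF : ℝ) : Prop :=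
  (∀ x : Fin n → ℝ, ∀ i j : Fin n, i ≠ j →
    ((n : ℝ) - 2) * f x * pd i (pd j φ) x - (m : ℝ) * φ x * pd i (pd j f) x
      - (m : ℝ) * pd i φ x * pd j f x - (m : ℝ) * pd j φ x * pd i f x = 0) ∧
  (∀ x : Fin n → ℝ, ∀ i : Fin n,
    φ x * (((n : ℝ) - 2) * f x * pd i (pd i φ) x - (m : ℝ) * φ x * pd i (pd i f) x
        - 2 * (m : ℝ) * pd i φ x * pd i f x)
      + ε i * (f x * φ x * (∑ k : Fin n, ε k * pd k (pd k φ) x)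
        - ((n : ℝ) - 1) * f x * (∑ k : Fin n, ε k * (pd k φ x) ^ 2)
        + (m : ℝ) * φ x * (∑ k : Fin n, ε k * pd k φ x * pd k f x))
      = ε i * lam * f x) ∧
  (∀ x : Fin n → ℝ,
    -(f x * (φ x) ^ 2 * (∑ k : Fin n, ε k * pd k (pd k f) x))
      + ((n : ℝ) - 2) * f x * φ x * (∑ k : Fin n, ε k * pd k f x * pd k φ x)
      - ((m : ℝ) - 1) * (φ x) ^ 2 * (∑ k : Fin n, ε k * (pd k f x) ^ 2)
      = lam * (f x) ^ 2 - lamF)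

noncomputable def lmap {n : ℕ} (α : Fin n → ℝ) : (Fin n → ℝ) →L[ℝ] ℝ :=
  ∑ i, α i • (ContinuousLinearMap.proj i : (Fin n → ℝ) →L[ℝ] ℝ)

lemma lmap_apply {n : ℕ} (α x : Fin n → ℝ) : lmap α x = ∑ i, α i * x i := by
  simp [lmap]

lemma pd_comp {n : ℕ} (α : Fin n → ℝ) (G : ℝ → ℝ) (hG : Differentiable ℝ G) (i : Fin n)
    (x : Fin n → ℝ) :
    pd i (fun y => G (∑ k, α k * y k)) x = α i * deriv G (∑ k, α k * x k) := by
  have h2 : (fun y => G (∑ k, α k * y k)) = fun y => G (lmap α y) := by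
    funext y; rw [lmap_apply]
  have h1 : HasFDerivAt (fun y => G (lmap α y)) (deriv G (lmap α x) • lmap α) x :=
    (hG (lmap α x)).hasDerivAt.comp_hasFDerivAt x (lmap α).hasFDerivAt
  rw [pd, h2, h1.fderiv]
  simp [lmap_apply, Pi.single_apply, mul_ite, Finset.sum_ite_eq', mul_comm]

lemma pd_pd_comp {n : ℕ} (α : Fin n → ℝ) (G : ℝ → ℝ) (hG : ContDiff ℝ (⊤ : ℕ∞) G) (i j : Fin n)
    (x : Fin n → ℝ) :
    pd i (pd j (fun y => G (∑ k, α k * y k))) x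
      = α i * α j * deriv (deriv G) (∑ k, α k * x k) := by
  have hG1 : Differentiable ℝ G := hG.differentiable (by simp)
  have hGi : ContDiff ℝ ((⊤ : ℕ∞) : WithTop ℕ∞) G := hG.of_le (by simp)
  have hG2' : Differentiable ℝ (deriv G) :=
    ((contDiff_infty_iff_deriv.mp hGi).2).differentiable (by simp)
  have h : pd j (fun y => G (∑ k, α k * y k))
      = fun y => (fun ξ => α j * deriv G ξ) (∑ k, α k * y k) := by
    funext y; exact pd_comp α G hG1 j y
  rw [h, pd_comp α _ (hG2'.const_mul (α j)) i x,
    deriv_const_mul (α j) (hG2' (∑ k, α k * x k))]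
  ring

/-- Theorem 1.2 (ii) of the paper: in the null case `Σᵢ εᵢαᵢ² = 0` with `α ≠ 0`,
the Einstein PDE system is equivalent to `λ = λ_F = 0` together with the single ODE
`(n−2)·F·Φ'' − m·Φ·F'' − 2m·Φ'·F' = 0`. -/
theorem theorem_1_2_null (n m : ℕ) (hn : 3 ≤ n) (hm : 1 ≤ m)
    (ε : Fin n → ℝ) (hε : ∀ i, ε i = 1 ∨ ε i = -1)
    (α : Fin n → ℝ) (hα0 : α ≠ 0)
    (hα : ∑ i : Fin n, ε i * (α i) ^ 2 = 0)
    (Φ F : ℝ → ℝ) (hΦ : ContDiff ℝ (⊤ : ℕ∞) Φ) (hF : ContDiff ℝ (⊤ : ℕ∞) F)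
    (hFpos : ∀ ξ : ℝ, 0 < F ξ) (hΦne : ∀ ξ : ℝ, Φ ξ ≠ 0)
    (lam lamF : ℝ) (hm1 : m = 1 → lamF = 0) :
    EinsteinPDE n m ε (fun x => Φ (∑ i : Fin n, α i * x i))
      (fun x => F (∑ i : Fin n, α i * x i)) lam lamF ↔
    (lam = 0 ∧ lamF = 0 ∧
      ∀ ξ : ℝ, ((n : ℝ) - 2) * F ξ * deriv (deriv Φ) ξ
        - (m : ℝ) * Φ ξ * deriv (deriv F) ξ
        - 2 * (m : ℝ) * deriv Φ ξ * deriv F ξ = 0) := by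
  obtain ⟨i₀, hi₀⟩ : ∃ i, α i ≠ 0 := Function.ne_iff.mp hα0
  have hΦd : Differentiable ℝ Φ := hΦ.differentiable (by simp)
  have hFd : Differentiable ℝ F := hF.differentiable (by simp)
  have eφ : ∀ (i : Fin n) (x : Fin n → ℝ),
      pd i (fun y => Φ (∑ k, α k * y k)) x = α i * deriv Φ (∑ k, α k * x k) :=
    pd_comp α Φ hΦd
  have ef : ∀ (i : Fin n) (x : Fin n → ℝ),
      pd i (fun y => F (∑ k, α k * y k)) x = α i * deriv F (∑ k, α k * x k) :=
    pd_comp α F hFd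
  have eφφ : ∀ (i j : Fin n) (x : Fin n → ℝ),
      pd i (pd j (fun y => Φ (∑ k, α k * y k))) x
        = α i * α j * deriv (deriv Φ) (∑ k, α k * x k) :=
    pd_pd_comp α Φ hΦ
  have eff : ∀ (i j : Fin n) (x : Fin n → ℝ),
      pd i (pd j (fun y => F (∑ k, α k * y k))) x
        = α i * α j * deriv (deriv F) (∑ k, α k * x k) :=
    pd_pd_comp α F hF
  have hz : ∀ (g : Fin n → ℝ) (c : ℝ), (∀ k, g k = ε k * α k ^ 2 * c) → ∑ k, g k = 0 := by
    intro g c hg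
    calc ∑ k, g k = ∑ k, (ε k * α k ^ 2) * c :=
          Finset.sum_congr rfl fun k _ => by rw [hg k]
      _ = (∑ k, ε k * α k ^ 2) * c := by rw [Finset.sum_mul]
      _ = 0 := by rw [hα, zero_mul]
  have S1 : ∀ x : Fin n → ℝ,
      ∑ k : Fin n, ε k * (α k * α k * deriv (deriv Φ) (∑ i : Fin n, α i * x i)) = 0 :=
    fun x => hz _ (deriv (deriv Φ) (∑ i : Fin n, α i * x i)) fun k => by ring
  have S2 : ∀ x : Fin n → ℝ,
      ∑ k : Fin n, ε k * (α k * deriv Φ (∑ i : Fin n, α i * x i)) ^ 2 = 0 :=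
    fun x => hz _ ((deriv Φ (∑ i : Fin n, α i * x i)) ^ 2) fun k => by ring
  have S3 : ∀ x : Fin n → ℝ,
      ∑ k : Fin n, ε k * (α k * deriv Φ (∑ i : Fin n, α i * x i))
        * (α k * deriv F (∑ i : Fin n, α i * x i)) = 0 :=
    fun x => hz _ (deriv Φ (∑ i : Fin n, α i * x i) * deriv F (∑ i : Fin n, α i * x i))
      fun k => by ring
  have S4 : ∀ x : Fin n → ℝ,
      ∑ k : Fin n, ε k * (α k * α k * deriv (deriv F) (∑ i : Fin n, α i * x i)) = 0 :=
    fun x => hz _ (deriv (deriv F) (∑ i : Fin n, α i * x i)) fun k => by ring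
  have S5 : ∀ x : Fin n → ℝ,
      ∑ k : Fin n, ε k * (α k * deriv F (∑ i : Fin n, α i * x i))
        * (α k * deriv Φ (∑ i : Fin n, α i * x i)) = 0 :=
    fun x => hz _ (deriv F (∑ i : Fin n, α i * x i) * deriv Φ (∑ i : Fin n, α i * x i))
      fun k => by ring
  have S6 : ∀ x : Fin n → ℝ,
      ∑ k : Fin n, ε k * (α k * deriv F (∑ i : Fin n, α i * x i)) ^ 2 = 0 :=
    fun x => hz _ ((deriv F (∑ i : Fin n, α i * x i)) ^ 2) fun k => by ring
  unfold EinsteinPDE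
  constructor
  · rintro ⟨h1, h2, h3⟩
    have hsurj : ∀ ξ : ℝ, ∃ x : Fin n → ℝ, (∑ i : Fin n, α i * x i) = ξ := by
      intro ξ
      refine ⟨Pi.single i₀ (ξ / α i₀), ?_⟩
      simp [Pi.single_apply, mul_ite, Finset.sum_ite_eq', hi₀]
      rw [mul_comm, div_mul_cancel₀ ξ hi₀]
    have hP2 : ∀ (x : Fin n → ℝ) (i : Fin n),
        α i ^ 2 * Φ (∑ k : Fin n, α k * x k) *
          (((n : ℝ) - 2) * F (∑ k : Fin n, α k * x k)
              * deriv (deriv Φ) (∑ k : Fin n, α k * x k)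
            - (m : ℝ) * Φ (∑ k : Fin n, α k * x k)
              * deriv (deriv F) (∑ k : Fin n, α k * x k)
            - 2 * (m : ℝ) * deriv Φ (∑ k : Fin n, α k * x k)
              * deriv F (∑ k : Fin n, α k * x k))
          = ε i * lam * F (∑ k : Fin n, α k * x k) := by
      intro x i
      have h := h2 x i
      simp only [eφφ, eff, eφ, ef] at h
      rw [S1 x, S2 x, S3 x] at h
      linear_combination h
    have hP3 : ∀ x : Fin n → ℝ, (0 : ℝ) = lam * F (∑ k : Fin n, α k * x k) ^ 2 - lamF := by
      intro x
      have h := h3 x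
      simp only [eff, ef, eφ] at h
      rw [S4 x, S5 x, S6 x] at h
      linear_combination h
    have hti₀ : ε i₀ * α i₀ ^ 2 ≠ 0 :=
      mul_ne_zero (by rcases hε i₀ with h | h <;> simp [h]) (pow_ne_zero 2 hi₀)
    have hpos : ∃ i, 0 < ε i * α i ^ 2 := by
      by_contra hcon
      push_neg at hcon
      exact hti₀ ((Finset.sum_eq_zero_iff_of_nonpos fun i _ => hcon i).mp hα i₀
        (Finset.mem_univ _))
    have hneg : ∃ i, ε i * α i ^ 2 < 0 := by
      by_contra hcon
      push_neg at hcon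
      exact hti₀ ((Finset.sum_eq_zero_iff_of_nonneg fun i _ => hcon i).mp hα i₀
        (Finset.mem_univ _))
    obtain ⟨ip, hip⟩ := hpos
    obtain ⟨iq, hiq⟩ := hneg
    have hεip : ε ip = 1 := by
      rcases hε ip with h | h
      · exact h
      · exfalso; nlinarith [sq_nonneg (α ip)]
    have hεiq : ε iq = -1 := by
      rcases hε iq with h | h
      · exfalso; nlinarith [sq_nonneg (α iq)]
      · exact h
    have hαp : 0 < α ip ^ 2 := by nlinarith [hip, hεip]
    have hαq : 0 < α iq ^ 2 := by nlinarith [hiq, hεiq]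
    have hlam : lam = 0 := by
      have ha := hP2 0 ip
      have hb := hP2 0 iq
      rw [hεip] at ha
      rw [hεiq] at hb
      have hc : lam * (F (∑ k : Fin n, α k * (0 : Fin n → ℝ) k)
          * (α ip ^ 2 + α iq ^ 2)) = 0 := by
        linear_combination α ip ^ 2 * hb - α iq ^ 2 * ha
      rcases mul_eq_zero.mp hc with h | h
      · exact h
      · exfalso
        have : 0 < F (∑ k : Fin n, α k * (0 : Fin n → ℝ) k) * (α ip ^ 2 + α iq ^ 2) := by
          have := hFpos (∑ k : Fin n, α k * (0 : Fin n → ℝ) k)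
          nlinarith
        linarith
    have hlamF : lamF = 0 := by
      have h := hP3 0
      rw [hlam] at h
      linarith
    refine ⟨hlam, hlamF, ?_⟩
    intro ξ
    obtain ⟨x, hx⟩ := hsurj ξ
    have h := hP2 x ip
    rw [hx, hεip, hlam] at h
    have h' : (α ip ^ 2 * Φ ξ) *
        (((n : ℝ) - 2) * F ξ * deriv (deriv Φ) ξ - (m : ℝ) * Φ ξ * deriv (deriv F) ξ
          - 2 * (m : ℝ) * deriv Φ ξ * deriv F ξ) = 0 := by
      linear_combination h
    rcases mul_eq_zero.mp h' with h'' | h''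
    · exfalso
      rcases mul_eq_zero.mp h'' with h3 | h3
      · exact (ne_of_gt hαp) h3
      · exact hΦne ξ h3
    · exact h''
  · rintro ⟨hlam, hlamF, hODE⟩
    refine ⟨?_, ?_, ?_⟩
    · intro x i j hij
      simp only [eφφ, eff, eφ, ef]
      linear_combination (α i * α j) * hODE (∑ k : Fin n, α k * x k)
    · intro x i
      simp only [eφφ, eff, eφ, ef]
      rw [S1 x, S2 x, S3 x, hlam]
      linear_combination (α i ^ 2 * Φ (∑ k : Fin n, α k * x k))
        * hODE (∑ k : Fin n, α k * x k)
    · intro x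
      simp only [eff, ef, eφ]
      rw [S4 x, S5 x, S6 x, hlam, hlamF]
      ring
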